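/- arXiv:1611.07793 — 2 statements merged into one kernel-verified Lean document; each statement's English description precedes it below -/
import Mathlib

section
/- For every n ≥ 1 and every 0 ≤ k ≤ n−1, the number of treeshelves of size n having exactly k left children equals the Eulerian number A(n,k), i.e. the number of permutations σ of {1,…,n} having exactly k descents (indices 1 ≤ i ≤ n−1 with σ(i) > σ(i+1)). -/
/-
In-order reading is a bijection from increasing binary trees to words without repeated letters:
the inverse splits a word at its minimal letter, which becomes the root, and recurses on both
sides. A node has a left child exactly when the letter read just before it is larger, so left
children of the tree correspond to descents of the word. Reading a permutation of `{1, …, n}` as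
its one-line word identifies both sides of the theorem with words that rearrange `1, …, n`.
-/

/-- Binary trees with natural-number labels, where each child slot (left/right)
is explicit; `leaf` denotes the absence of a subtree.  A *treeshelf* will be such
a tree whose labels are exactly `{1, …, n}` and increase away from the root. -/
inductive TShelf : Type where
  | leaf : TShelf
  | node : ℕ → TShelf → TShelf → TShelf

namespace TShelf

/-- Whether the tree is nonempty (i.e. an actual node). -/
def isNode : TShelf → Bool
  | leaf => false
  | node _ _ _ => true

/-- The label of the root (junk value `0` for the empty tree). -/
def rootLabel : TShelf → ℕ
  | leaf => 0
  | node a _ _ => a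

/-- The left subtree. -/
def left : TShelf → TShelf
  | leaf => leaf
  | node _ l _ => l

/-- The right subtree. -/
def right : TShelf → TShelf
  | leaf => leaf
  | node _ _ r => r

/-- The multiset of labels occurring in the tree. -/
def labels : TShelf → Multiset ℕ
  | leaf => 0
  | node a l r => a ::ₘ (l.labels + r.labels)

/-- Every child's label is greater than its parent's label. -/
def increasing : TShelf → Bool
  | leaf => true
  | node a l r =>
      (!l.isNode || decide (a < l.rootLabel)) &&
      (!r.isNode || decide (a < r.rootLabel)) &&
      l.increasing && r.increasing

/-- The number of left children (nodes attached to their parent as a left child). -/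
def numLeft : TShelf → ℕ
  | leaf => 0
  | node _ l r => (if l.isNode then 1 else 0) + l.numLeft + r.numLeft

/-- `t` is a treeshelf of size `n`: its nodes are labeled bijectively by
`{1, …, n}` and labels increase from parents to children. -/
def IsShelf (n : ℕ) (t : TShelf) : Prop :=
  t.labels = (Finset.Icc 1 n).val ∧ t.increasing = true

/-- Avoidance of the pattern "a left child having a right child":
no node is simultaneously the left child of its parent and has a right child. -/
def avoidsLR : TShelf → Bool
  | leaf => true
  | node _ l r => !(l.isNode && l.right.isNode) && l.avoidsLR && r.avoidsLR

/-- Avoidance of the pattern "a left child having a left child":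
no node is simultaneously the left child of its parent and has a left child. -/
def avoidsLL : TShelf → Bool
  | leaf => true
  | node _ l r => !(l.isNode && l.left.isNode) && l.avoidsLL && r.avoidsLL

/-- Avoidance of the pattern "left label smaller than right label": no node has
both a left and a right child with the left child's label smaller than the
right child's label. -/
def avoidsLess : TShelf → Bool
  | leaf => true
  | node _ l r =>
      !(l.isNode && r.isNode && decide (l.rootLabel < r.rootLabel)) &&
      l.avoidsLess && r.avoidsLess

/-- Canonical representation of unordered sibling pairs: whenever a node has two
children, the left one carries the smaller label.  Trees satisfying this are
canonical representatives of trees whose sibling pairs are unordered. -/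
def pairCanon : TShelf → Bool
  | leaf => true
  | node _ l r =>
      (!(l.isNode && r.isNode) || decide (l.rootLabel < r.rootLabel)) &&
      l.pairCanon && r.pairCanon

/-- Canonical representation of untagged only children: every only child is a
right child.  Together with `pairCanon`, trees satisfying this are canonical
representatives of unordered binary increasing trees. -/
def singleRight : TShelf → Bool
  | leaf => true
  | node _ l r => (!l.isNode || r.isNode) && l.singleRight && r.singleRight

end TShelf

open Finset

namespace List

variable {α : Type*} [LinearOrder α]

def descents : List α → ℕ
  | [] => 0
  | [_] => 0
  | a :: b :: l => (if b < a then 1 else 0) + descents (b :: l)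

theorem descents_cons_of_forall_lt {a : α} {l : List α} (h : ∀ x ∈ l, a < x) :
    (a :: l).descents = l.descents := by
  cases l with
  | nil => rfl
  | cons b l => simp [descents, (h b mem_cons_self).not_gt]

theorem descents_append_cons_of_forall_lt {a : α} {l r : List α}
    (hl : ∀ x ∈ l, a < x) (hr : ∀ x ∈ r, a < x) :
    (l ++ a :: r).descents = l.descents + (if l = [] then 0 else 1) + r.descents := by
  induction l with
  | nil => simp [descents, descents_cons_of_forall_lt hr]
  | cons x l ih =>
    cases l with
    | nil => simp [descents, hl x mem_cons_self, descents_cons_of_forall_lt hr]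
    | cons y l =>
      simp only [cons_append, descents] at ih ⊢
      rw [ih fun z hz => hl z (mem_cons_of_mem x hz)]
      simp only [reduceCtorEq, ↓reduceIte]
      omega

theorem card_filter_descents_ofFn {n : ℕ} (f : Fin n → α) :
    #{p : Fin n × Fin n | (p.2 : ℕ) = p.1 + 1 ∧ f p.2 < f p.1} = (ofFn f).descents := by
  induction n with
  | zero => rfl
  | succ n ih =>
    cases n with
    | zero => simp [descents]
    | succ n =>
      rw [ofFn_succ, ofFn_succ, descents, ← ofFn_succ (f := fun i => f i.succ), ← ih]
      simp only [Finset.card_filter, Fintype.sum_prod_type, Fin.sum_univ_succ]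
      simp only [Fin.coe_ofNat_eq_mod, Nat.zero_mod, zero_add, zero_ne_one, lt_self_iff_false,
        and_self, ↓reduceIte, Fin.succ_zero_eq_one, Nat.one_mod, true_and, Fin.val_succ,
        Nat.add_eq_right, Nat.add_eq_zero_iff, one_ne_zero, and_false, false_and, sum_const_zero,
        add_zero, Nat.reduceAdd, OfNat.zero_ne_ofNat, OfNat.one_ne_ofNat, Nat.reduceEqDiff,
        sum_boole, Nat.cast_id, Nat.right_eq_add, OfNat.ofNat_ne_zero, Nat.add_right_cancel_iff]
      rfl

theorem append_cons_inj_of_forall_lt {l r l' r' : List α} {a a' : α}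
    (hl : ∀ x ∈ l, a < x) (hr : ∀ x ∈ r, a < x) (hl' : ∀ x ∈ l', a' < x)
    (hr' : ∀ x ∈ r', a' < x) (h : l ++ a :: r = l' ++ a' :: r') :
    l = l' ∧ a = a' ∧ r = r' := by
  have le_of_mem {l r : List α} {a b : α} (hl : ∀ x ∈ l, a < x) (hr : ∀ x ∈ r, a < x)
      (hb : b ∈ l ++ a :: r) : a ≤ b := by
    simp only [mem_append, mem_cons] at hb
    rcases hb with hb | rfl | hb
    exacts [(hl b hb).le, le_rfl, (hr b hb).le]
  have ha : a = a' :=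
    le_antisymm (le_of_mem hl hr (h ▸ by simp)) (le_of_mem hl' hr' (h ▸ by simp))
  subst ha
  exact (append_cons_inj_of_notMem (fun h => (hl a h).false) (fun h => (hr a h).false)).mp h

theorem exists_eq_append_cons_forall_lt {L : List α} (hL : L.Nodup) (hne : L ≠ []) :
    ∃ l a r, L = l ++ a :: r ∧ (∀ x ∈ l, a < x) ∧ (∀ x ∈ r, a < x) := by
  obtain ⟨m, hm, hmin⟩ : ∃ m ∈ L, ∀ x ∈ L, m ≤ x :=
    ⟨L.min hne, min_mem hne, fun x hx => min_le_of_mem hx⟩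
  obtain ⟨l, r, rfl⟩ := append_of_mem hm
  obtain ⟨-, hmr, hml⟩ := nodup_append.mp hL
  replace hml : m ∉ l := fun h => hml m h m mem_cons_self rfl
  replace hmr : m ∉ r := (nodup_cons.mp hmr).1
  refine ⟨l, m, r, rfl, fun x hx => ?_, fun x hx => ?_⟩
  · exact (hmin x (by simp [hx])).lt_of_ne (by rintro rfl; exact hml hx)
  · exact (hmin x (by simp [hx])).lt_of_ne (by rintro rfl; exact hmr hx)

end List

namespace TShelf

def inorder : TShelf → List ℕ
  | leaf => []
  | node a l r => l.inorder ++ a :: r.inorder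

theorem labels_eq_coe_inorder : ∀ t : TShelf, t.labels = t.inorder
  | leaf => rfl
  | node a l r => by
    simp [labels, inorder, labels_eq_coe_inorder l, labels_eq_coe_inorder r, List.perm_middle.symm]

theorem increasing_node_iff_rootLabel {a : ℕ} {l r : TShelf} :
    (node a l r).increasing ↔ (l.isNode → a < l.rootLabel) ∧ (r.isNode → a < r.rootLabel) ∧
      l.increasing ∧ r.increasing := by
  simp only [increasing, Bool.and_eq_true, Bool.or_eq_true, Bool.not_eq_true', decide_eq_true_eq,
    ← Bool.not_eq_true, ← imp_iff_not_or, and_assoc]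

theorem forall_mem_inorder_lt_iff {t : TShelf} (ht : t.increasing) {a : ℕ} :
    (∀ x ∈ t.inorder, a < x) ↔ (t.isNode → a < t.rootLabel) := by
  induction t generalizing a with
  | leaf => simp [inorder, isNode]
  | node b l r ihl ihr =>
    obtain ⟨hl, hr, hil, hir⟩ := increasing_node_iff_rootLabel.mp ht
    have hbl := (ihl hil).mpr hl
    have hbr := (ihr hir).mpr hr
    simp only [inorder, isNode, rootLabel, List.mem_append, List.mem_cons, forall_const]
    refine ⟨fun h => h b (Or.inr (Or.inl rfl)), fun hab x hx => ?_⟩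
    rcases hx with hx | rfl | hx
    exacts [hab.trans (hbl x hx), hab, hab.trans (hbr x hx)]

theorem increasing_node_iff {a : ℕ} {l r : TShelf} :
    (node a l r).increasing ↔ (∀ x ∈ l.inorder, a < x) ∧ (∀ x ∈ r.inorder, a < x) ∧
      l.increasing ∧ r.increasing := by
  rw [increasing_node_iff_rootLabel]
  constructor
  · rintro ⟨hl, hr, hil, hir⟩
    exact ⟨(forall_mem_inorder_lt_iff hil).mpr hl, (forall_mem_inorder_lt_iff hir).mpr hr,
      hil, hir⟩
  · rintro ⟨hl, hr, hil, hir⟩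
    exact ⟨(forall_mem_inorder_lt_iff hil).mp hl, (forall_mem_inorder_lt_iff hir).mp hr,
      hil, hir⟩

theorem numLeft_eq_descents_inorder {t : TShelf} (ht : t.increasing) :
    t.numLeft = t.inorder.descents := by
  induction t with
  | leaf => rfl
  | node a l r ihl ihr =>
    obtain ⟨hl, hr, hil, hir⟩ := increasing_node_iff.mp ht
    rw [numLeft, inorder, List.descents_append_cons_of_forall_lt hl hr, ihl hil, ihr hir]
    cases l <;> simp [isNode, inorder, add_comm]

theorem eq_of_inorder_eq {t₁ t₂ : TShelf} (h₁ : t₁.increasing) (h₂ : t₂.increasing)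
    (h : t₁.inorder = t₂.inorder) : t₁ = t₂ := by
  induction t₁ generalizing t₂ with
  | leaf => cases t₂ <;> simp_all [inorder]
  | node a l r ihl ihr =>
    cases t₂ with
    | leaf => simp [inorder] at h
    | node a' l' r' =>
      obtain ⟨hl, hr, hil, hir⟩ := increasing_node_iff.mp h₁
      obtain ⟨hl', hr', hil', hir'⟩ := increasing_node_iff.mp h₂
      obtain ⟨hl_eq, rfl, hr_eq⟩ := List.append_cons_inj_of_forall_lt hl hr hl' hr' h
      rw [ihl hil hil' hl_eq, ihr hir hir' hr_eq]

theorem exists_increasing_inorder_eq (L : List ℕ) (hL : L.Nodup) :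
    ∃ t : TShelf, t.increasing ∧ t.inorder = L := by
  induction h : L.length using Nat.strong_induction_on generalizing L with
  | _ n ih =>
    rcases eq_or_ne L [] with rfl | hne
    · exact ⟨leaf, rfl, rfl⟩
    obtain ⟨l, a, r, rfl, hl, hr⟩ := List.exists_eq_append_cons_forall_lt hL hne
    obtain ⟨hl_len, hr_len⟩ : l.length < n ∧ r.length < n := by
      rw [← h, List.length_append, List.length_cons]
      omega
    have hL' := List.nodup_append.mp hL
    obtain ⟨tl, hil, rfl⟩ := ih l.length hl_len l hL'.1 rfl
    obtain ⟨tr, hir, rfl⟩ := ih r.length hr_len r (List.nodup_cons.mp hL'.2.1).2 rfl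
    exact ⟨node a tl tr, increasing_node_iff.mpr ⟨hl, hr, hil, hir⟩, rfl⟩

end TShelf

open TShelf in
theorem card_isShelf_numLeft_eq (n k : ℕ) :
    Nat.card {t : TShelf // IsShelf n t ∧ t.numLeft = k} =
      Nat.card {L : List ℕ // (L : Multiset ℕ) = (Icc 1 n).val ∧ L.descents = k} := by
  refine Nat.card_eq_of_bijective (fun t => ⟨t.1.inorder, labels_eq_coe_inorder t.1 ▸ t.2.1.1,
    numLeft_eq_descents_inorder t.2.1.2 ▸ t.2.2⟩) ⟨fun t₁ t₂ h => ?_, ?_⟩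
  · exact Subtype.ext (eq_of_inorder_eq t₁.2.1.2 t₂.2.1.2 (congrArg Subtype.val h))
  · rintro ⟨L, hL, hk⟩
    have hnd : L.Nodup := Multiset.coe_nodup.mp (hL ▸ (Icc 1 n).nodup)
    obtain ⟨t, ht, rfl⟩ := exists_increasing_inorder_eq L hnd
    exact ⟨⟨t, ⟨labels_eq_coe_inorder t ▸ hL, ht⟩, numLeft_eq_descents_inorder ht ▸ hk⟩, rfl⟩

namespace Equiv.Perm

variable {n : ℕ}

theorem coe_ofFn_val_add_one (σ : Perm (Fin n)) :
    (List.ofFn (fun i => (σ i : ℕ) + 1) : Multiset ℕ) = (Icc 1 n).val := by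
  have hnd : (List.ofFn (fun i => (σ i : ℕ) + 1)).Nodup :=
    List.nodup_ofFn.mpr fun i j h => σ.injective (Fin.ext (by simpa using h))
  refine (Multiset.Nodup.ext (Multiset.coe_nodup.mpr hnd) (Icc 1 n).nodup).mpr fun x => ?_
  simp only [Multiset.mem_coe, List.mem_ofFn, Finset.mem_val, Finset.mem_Icc]
  constructor
  · rintro ⟨i, rfl⟩
    have := (σ i).isLt
    omega
  · rintro ⟨h₁, h₂⟩
    exact ⟨σ.symm ⟨x - 1, by omega⟩, by simp only [apply_symm_apply]; omega⟩

theorem exists_ofFn_val_add_one_eq {L : List ℕ} (hL : (L : Multiset ℕ) = (Icc 1 n).val) :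
    ∃ σ : Perm (Fin n), List.ofFn (fun i => (σ i : ℕ) + 1) = L := by
  have hlen : L.length = n := by simpa using congrArg Multiset.card hL
  have hnd : L.Nodup := Multiset.coe_nodup.mp (hL ▸ (Icc 1 n).nodup)
  have hmem : ∀ x ∈ L, 1 ≤ x ∧ x ≤ n := fun x hx =>
    Finset.mem_Icc.mp (Finset.mem_val.mp (hL ▸ Multiset.mem_coe.mpr hx))
  have hi (i : Fin n) : (i : ℕ) < L.length := by omega
  have hL_mem (i : Fin n) := hmem _ (L.getElem_mem (hi i))
  let g : Fin n → Fin n := fun i => ⟨L[(i : ℕ)]'(hi i) - 1, by have := hL_mem i; omega⟩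
  have hg : Function.Injective g := fun i j h => by
    have hLi := hL_mem i
    have hLj := hL_mem j
    exact Fin.ext ((hnd.getElem_inj_iff).mp (by simp only [g, Fin.mk.injEq] at h; omega))
  refine ⟨Equiv.ofBijective g hg.bijective_of_finite, List.ext_getElem (by simp [hlen]) ?_⟩
  intro i h₁ h₂
  have := hmem _ (L.getElem_mem h₂)
  simp only [ofBijective_apply, List.getElem_ofFn, g]
  omega

theorem card_filter_descents_eq (σ : Perm (Fin n)) :
    #{p : Fin n × Fin n | (p.2 : ℕ) = p.1 + 1 ∧ σ p.2 < σ p.1} =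
      (List.ofFn (fun i => (σ i : ℕ) + 1)).descents := by
  rw [← List.card_filter_descents_ofFn]
  simp only [add_lt_add_iff_right, Fin.val_fin_lt]

end Equiv.Perm

theorem card_perm_descents_eq (n k : ℕ) :
    Nat.card {σ : Equiv.Perm (Fin n) //
        #{p : Fin n × Fin n | (p.2 : ℕ) = p.1 + 1 ∧ σ p.2 < σ p.1} = k} =
      Nat.card {L : List ℕ // (L : Multiset ℕ) = (Icc 1 n).val ∧ L.descents = k} := by
  refine Nat.card_eq_of_bijective (fun σ => ⟨List.ofFn (fun i => (σ.1 i : ℕ) + 1),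
    σ.1.coe_ofFn_val_add_one, σ.1.card_filter_descents_eq ▸ σ.2⟩) ⟨fun σ τ h => ?_, ?_⟩
  · refine Subtype.ext (Equiv.ext fun i => Fin.ext ?_)
    simpa using congrFun (List.ofFn_injective (congrArg Subtype.val h)) i
  · rintro ⟨L, hL, hk⟩
    obtain ⟨σ, rfl⟩ := Equiv.Perm.exists_ofFn_val_add_one_eq hL
    exact ⟨⟨σ, σ.card_filter_descents_eq ▸ hk⟩, rfl⟩

theorem stmt1_general (n k : ℕ) :
    Nat.card {t : TShelf // TShelf.IsShelf n t ∧ t.numLeft = k} =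
      Nat.card {σ : Equiv.Perm (Fin n) //
        (Finset.univ.filter (fun p : Fin n × Fin n =>
          (p.2 : ℕ) = (p.1 : ℕ) + 1 ∧ σ p.2 < σ p.1)).card = k} := by
  rw [card_isShelf_numLeft_eq, card_perm_descents_eq]

/-- treeshelves of size `n` with exactly `k` left children are
equinumerous with permutations of `{1,…,n}` with exactly `k` descents. -/
theorem stmt1 (n k : ℕ) (hn : 1 ≤ n) (hk : k ≤ n - 1) :
    Nat.card {t : TShelf // TShelf.IsShelf n t ∧ t.numLeft = k} =
      Nat.card {σ : Equiv.Perm (Fin n) //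
        (Finset.univ.filter (fun p : Fin n × Fin n =>
          (p.2 : ℕ) = (p.1 : ℕ) + 1 ∧ σ p.2 < σ p.1)).card = k} :=
  stmt1_general n k
end

section
/- For every n ≥ 1, the total number of left children summed over all treeshelves of size n (the popularity of left children) equals the Lah number n!·(n−1)/2; equivalently, the exponential generating function of this popularity is z²/(2z² − 4z + 2) = z²/(2(1−z)²). -/
/-!
Mirroring a treeshelf (swapping left and right everywhere) is an involution on treeshelves of
size `n` that exchanges left and right children, so left and right children are equally popular.
Every node but the root is a left or a right child, so each treeshelf has `n - 1` children in
total. Finally there are `n!` treeshelves of size `n`: those of size `n + 1` arise exactly once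
each by hanging the label `n + 1` into one of the `n + 1` empty child slots of a treeshelf of
size `n`. Hence twice the popularity of left children is `n! (n - 1)`.
-/

namespace TShelf

def size : TShelf → ℕ
  | leaf => 0
  | node _ l r => l.size + r.size + 1

def numRight : TShelf → ℕ
  | leaf => 0
  | node _ l r => (if r.isNode then 1 else 0) + l.numRight + r.numRight

def mirror : TShelf → TShelf
  | leaf => leaf
  | node a l r => node a r.mirror l.mirror

lemma isNode_eq_false_iff {t : TShelf} : t.isNode = false ↔ t = leaf := by
  cases t <;> simp [isNode]

lemma rootLabel_mem_labels {t : TShelf} (h : t.isNode = true) : t.rootLabel ∈ t.labels := by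
  cases t <;> simp_all [isNode, rootLabel, labels]

lemma increasing_node {a : ℕ} {l r : TShelf} :
    (node a l r).increasing = true ↔
      (l.isNode = true → a < l.rootLabel) ∧ (r.isNode = true → a < r.rootLabel) ∧
        l.increasing = true ∧ r.increasing = true := by
  simp only [increasing, Bool.and_eq_true, Bool.or_eq_true, Bool.not_eq_true',
    decide_eq_true_eq, ← Bool.not_eq_true, imp_iff_not_or, and_assoc]

lemma card_labels (t : TShelf) : Multiset.card t.labels = t.size := by
  induction t with
  | leaf => rfl
  | node a l r ihl ihr => simp [labels, size, ihl, ihr, add_comm]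

lemma IsShelf.size_eq {n : ℕ} {t : TShelf} (h : IsShelf n t) : t.size = n := by
  simp [← card_labels, h.1]

lemma numLeft_add_numRight (t : TShelf) : t.numLeft + t.numRight = t.size - 1 := by
  induction t with
  | leaf => rfl
  | node a l r ihl ihr =>
    have hslot (s : TShelf) : (if s.isNode then 1 else 0) + (s.size - 1) = s.size := by
      cases s with
      | leaf => rfl
      | node => simp only [isNode, size, ↓reduceIte]; omega
    have := hslot l
    have := hslot r
    simp only [numLeft, numRight, size]
    omega

@[simp] lemma isNode_mirror (t : TShelf) : t.mirror.isNode = t.isNode := by cases t <;> rfl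

@[simp] lemma rootLabel_mirror (t : TShelf) : t.mirror.rootLabel = t.rootLabel := by
  cases t <;> rfl

@[simp] lemma mirror_mirror (t : TShelf) : t.mirror.mirror = t := by
  induction t <;> simp_all [mirror]

@[simp] lemma labels_mirror (t : TShelf) : t.mirror.labels = t.labels := by
  induction t <;> simp_all [mirror, labels, add_comm]

@[simp] lemma increasing_mirror (t : TShelf) : t.mirror.increasing = t.increasing := by
  induction t with
  | leaf => rfl
  | node a l r ihl ihr =>
    rw [Bool.eq_iff_iff, mirror, increasing_node, increasing_node]
    simp only [isNode_mirror, rootLabel_mirror, ihl, ihr]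
    tauto

@[simp] lemma numLeft_mirror (t : TShelf) : t.mirror.numLeft = t.numRight := by
  induction t with
  | leaf => rfl
  | node a l r ihl ihr => simp only [mirror, numLeft, numRight, isNode_mirror, ihl, ihr]; omega

lemma IsShelf.mirror {n : ℕ} {t : TShelf} (h : IsShelf n t) : IsShelf n t.mirror := by
  simpa [IsShelf] using h

/-- The empty child slots of a tree, as paths from the root (`false` = go left). -/
def leafPaths : TShelf → List (List Bool)
  | leaf => [[]]
  | node _ l r => l.leafPaths.map (List.cons false) ++ r.leafPaths.map (List.cons true)

def ins : TShelf → List Bool → ℕ → TShelf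
  | leaf, _, m => node m leaf leaf
  | node a l r, [], _ => node a l r
  | node a l r, false :: p, m => node a (ins l p m) r
  | node a l r, true :: p, m => node a l (ins r p m)

def del : TShelf → ℕ → TShelf
  | leaf, _ => leaf
  | node a l r, m => if a = m then leaf else node a (del l m) (del r m)

lemma mem_leafPaths_node {a : ℕ} {l r : TShelf} {p : List Bool} :
    p ∈ (node a l r).leafPaths ↔
      (∃ q ∈ l.leafPaths, false :: q = p) ∨ ∃ q ∈ r.leafPaths, true :: q = p := by
  simp only [leafPaths, List.mem_append, List.mem_map]

lemma length_leafPaths (t : TShelf) : t.leafPaths.length = t.size + 1 := by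
  induction t with
  | leaf => rfl
  | node a l r ihl ihr =>
    simp only [leafPaths, size, List.length_append, List.length_map, ihl, ihr]; omega

lemma nodup_leafPaths (t : TShelf) : t.leafPaths.Nodup := by
  induction t with
  | leaf => simp [leafPaths]
  | node a l r ihl ihr =>
    refine (ihl.map List.cons_injective).append (ihr.map List.cons_injective) ?_
    simp [List.disjoint_left]

lemma labels_ins {t : TShelf} {p : List Bool} (m : ℕ) (hp : p ∈ t.leafPaths) :
    (ins t p m).labels = m ::ₘ t.labels := by
  induction t generalizing p with
  | leaf =>
    obtain rfl : p = [] := by simpa [leafPaths] using hp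
    rfl
  | node a l r ihl ihr =>
    rcases mem_leafPaths_node.1 hp with ⟨q, hq, rfl⟩ | ⟨q, hq, rfl⟩
    · simp only [ins, labels, ihl hq, Multiset.cons_add, Multiset.cons_swap]
    · simp only [ins, labels, ihr hq, Multiset.add_cons, Multiset.cons_swap]

lemma size_ins {t : TShelf} {p : List Bool} (m : ℕ) (hp : p ∈ t.leafPaths) :
    (ins t p m).size = t.size + 1 := by
  simp [← card_labels, labels_ins m hp]

lemma ins_inj {t : TShelf} {p q : List Bool} {m : ℕ} (hp : p ∈ t.leafPaths)
    (hq : q ∈ t.leafPaths) (h : ins t p m = ins t q m) : p = q := by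
  induction t generalizing p q with
  | leaf => simp_all [leafPaths]
  | node a l r ihl ihr =>
    rcases mem_leafPaths_node.1 hp with ⟨p', hp', rfl⟩ | ⟨p', hp', rfl⟩ <;>
      rcases mem_leafPaths_node.1 hq with ⟨q', hq', rfl⟩ | ⟨q', hq', rfl⟩ <;>
      simp only [ins, node.injEq, List.cons.injEq, true_and, and_true] at h ⊢
    · exact ihl hp' hq' h
    · have := congrArg size h.1; rw [size_ins m hp'] at this; omega
    · have := congrArg size h.1; rw [size_ins m hq'] at this; omega
    · exact ihr hp' hq' h

lemma lt_rootLabel_ins {a m : ℕ} {t : TShelf} (p : List Bool) (ham : a < m)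
    (h : t.isNode = true → a < t.rootLabel) : a < (ins t p m).rootLabel := by
  match t, p with
  | leaf, _ => exact ham
  | node .., [] => exact h rfl
  | node .., false :: _ => exact h rfl
  | node .., true :: _ => exact h rfl

lemma increasing_ins {t : TShelf} {p : List Bool} {m : ℕ} (hp : p ∈ t.leafPaths)
    (hinc : t.increasing = true) (hm : ∀ x ∈ t.labels, x < m) :
    (ins t p m).increasing = true := by
  induction t generalizing p with
  | leaf =>
    obtain rfl : p = [] := by simpa [leafPaths] using hp
    rfl
  | node a l r ihl ihr =>
    have ham : a < m := hm a (by simp [labels])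
    obtain ⟨hl, hr, hlinc, hrinc⟩ := increasing_node.1 hinc
    rcases mem_leafPaths_node.1 hp with ⟨q, hq, rfl⟩ | ⟨q, hq, rfl⟩
    · exact increasing_node.2 ⟨fun _ => lt_rootLabel_ins q ham hl, hr,
        ihl hq hlinc fun x hx => hm x (by simp [labels, hx]), hrinc⟩
    · exact increasing_node.2 ⟨hl, fun _ => lt_rootLabel_ins q ham hr, hlinc,
        ihr hq hrinc fun x hx => hm x (by simp [labels, hx])⟩

lemma del_of_notMem {t : TShelf} {m : ℕ} (h : m ∉ t.labels) : del t m = t := by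
  induction t with
  | leaf => rfl
  | node a l r ihl ihr =>
    simp only [labels, Multiset.mem_cons, Multiset.mem_add, not_or] at h
    simp [del, Ne.symm h.1, ihl h.2.1, ihr h.2.2]

lemma del_ins {t : TShelf} {p : List Bool} {m : ℕ} (hp : p ∈ t.leafPaths)
    (hm : m ∉ t.labels) : del (ins t p m) m = t := by
  induction t generalizing p with
  | leaf =>
    obtain rfl : p = [] := by simpa [leafPaths] using hp
    simp [ins, del]
  | node a l r ihl ihr =>
    simp only [labels, Multiset.mem_cons, Multiset.mem_add, not_or] at hm
    obtain ⟨ham, hml, hmr⟩ := hm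
    rcases mem_leafPaths_node.1 hp with ⟨q, hq, rfl⟩ | ⟨q, hq, rfl⟩
    · simp [ins, del, Ne.symm ham, ihl hq hml, del_of_notMem hmr]
    · simp [ins, del, Ne.symm ham, ihr hq hmr, del_of_notMem hml]

lemma lt_rootLabel_del {a : ℕ} {t : TShelf} (m : ℕ) (h : t.isNode = true → a < t.rootLabel) :
    (del t m).isNode = true → a < (del t m).rootLabel := by
  cases t with
  | leaf => simp [del, isNode]
  | node b l r => by_cases hbm : b = m <;> simp_all [del, isNode, rootLabel]

lemma increasing_del {t : TShelf} (m : ℕ) (hinc : t.increasing = true) :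
    (del t m).increasing = true := by
  induction t with
  | leaf => rfl
  | node a l r ihl ihr =>
    obtain ⟨hl, hr, hlinc, hrinc⟩ := increasing_node.1 hinc
    by_cases ham : a = m
    · simp [del, ham, increasing]
    · simp only [del, ham, if_false]
      exact increasing_node.2
        ⟨lt_rootLabel_del m hl, lt_rootLabel_del m hr, ihl hlinc, ihr hrinc⟩

/-- In an increasing tree the largest label sits in a leaf, so deleting it leaves a slot
into which it can be hung back. -/
lemma exists_ins_del {t : TShelf} {m : ℕ} (hinc : t.increasing = true)
    (hnd : t.labels.Nodup) (hmem : m ∈ t.labels) (hmax : ∀ x ∈ t.labels, x ≤ m) :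
    ∃ p ∈ (del t m).leafPaths, ins (del t m) p m = t := by
  induction t with
  | leaf => simp [labels] at hmem
  | node a l r ihl ihr =>
    obtain ⟨hl, hr, hlinc, hrinc⟩ := increasing_node.1 hinc
    obtain ⟨-, hlnd, hrnd, hdisj⟩ : _ ∧ _ ∧ _ ∧ _ := by
      simpa only [labels, Multiset.nodup_cons, Multiset.nodup_add] using hnd
    have hmaxl : ∀ x ∈ l.labels, x ≤ m := fun x hx => hmax x (by simp [labels, hx])
    have hmaxr : ∀ x ∈ r.labels, x ≤ m := fun x hx => hmax x (by simp [labels, hx])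
    by_cases ham : a = m
    · subst ham
      have hleaf {s : TShelf} (hs : s.isNode = true → a < s.rootLabel)
          (hsmax : ∀ x ∈ s.labels, x ≤ a) : s = leaf := by
        by_contra hne
        have hnode : s.isNode = true := Bool.not_eq_false _ ▸ mt isNode_eq_false_iff.1 hne
        exact absurd (hsmax _ (rootLabel_mem_labels hnode)) (not_le.2 (hs hnode))
      obtain rfl := hleaf hl hmaxl
      obtain rfl := hleaf hr hmaxr
      exact ⟨[], by simp [del, leafPaths], by simp [del, ins]⟩
    · rcases (by simpa [labels, Ne.symm ham] using hmem : m ∈ l.labels ∨ m ∈ r.labels)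
        with hml | hmr
      · obtain ⟨p, hp, hins⟩ := ihl hlinc hlnd hml hmaxl
        have hdel : del (node a l r) m = node a (del l m) r := by
          simp [del, ham, del_of_notMem (Multiset.disjoint_left.1 hdisj hml)]
        exact ⟨false :: p, hdel ▸ mem_leafPaths_node.2 (.inl ⟨p, hp, rfl⟩),
          by simp [hdel, ins, hins]⟩
      · obtain ⟨p, hp, hins⟩ := ihr hrinc hrnd hmr hmaxr
        have hdel : del (node a l r) m = node a l (del r m) := by
          simp [del, ham, del_of_notMem (Multiset.disjoint_right.1 hdisj hmr)]
        exact ⟨true :: p, hdel ▸ mem_leafPaths_node.2 (.inr ⟨p, hp, rfl⟩),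
          by simp [hdel, ins, hins]⟩

def shelfList : ℕ → List TShelf
  | 0 => [leaf]
  | n + 1 => (shelfList n).flatMap fun s => s.leafPaths.map fun p => ins s p (n + 1)

lemma Icc_val_succ (n : ℕ) :
    (Finset.Icc 1 (n + 1)).val = (n + 1) ::ₘ (Finset.Icc 1 n).val := by
  rw [← Finset.insert_val_of_notMem (by simp), Finset.insert_Icc_right_eq_Icc_add_one (by omega)]

lemma isShelf_zero_iff {t : TShelf} : IsShelf 0 t ↔ t = leaf := by
  constructor
  · rintro ⟨h, -⟩
    cases t <;> simp_all [labels]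
  · rintro rfl
    exact ⟨by simp [labels], rfl⟩

lemma isShelf_succ_iff {n : ℕ} {t : TShelf} :
    IsShelf (n + 1) t ↔ ∃ s, IsShelf n s ∧ ∃ p ∈ s.leafPaths, ins s p (n + 1) = t := by
  constructor
  · rintro ⟨hlab, hinc⟩
    have hmem : n + 1 ∈ t.labels := by simp [hlab]
    have hmax : ∀ x ∈ t.labels, x ≤ n + 1 := by simp [hlab]
    obtain ⟨p, hp, hins⟩ := exists_ins_del hinc (hlab ▸ Finset.nodup _) hmem hmax
    refine ⟨del t (n + 1), ⟨?_, increasing_del _ hinc⟩, p, hp, hins⟩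
    have := congrArg labels hins
    rwa [labels_ins _ hp, hlab, Icc_val_succ, Multiset.cons_inj_right] at this
  · rintro ⟨s, ⟨hlab, hinc⟩, p, hp, rfl⟩
    refine ⟨by rw [labels_ins _ hp, hlab, Icc_val_succ], increasing_ins hp hinc ?_⟩
    simp [hlab]

lemma mem_shelfList {n : ℕ} {t : TShelf} : t ∈ shelfList n ↔ IsShelf n t := by
  induction n generalizing t with
  | zero => simp [shelfList, isShelf_zero_iff]
  | succ n ih => simp [shelfList, isShelf_succ_iff, ih]

lemma succ_notMem_labels {n : ℕ} {s : TShelf} (hs : IsShelf n s) : n + 1 ∉ s.labels := by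
  simp [hs.1]

lemma nodup_shelfList (n : ℕ) : (shelfList n).Nodup := by
  induction n with
  | zero => simp [shelfList]
  | succ n ih =>
    refine List.nodup_flatMap.2 ⟨fun s _ => (nodup_leafPaths s).map_on fun p hp q hq =>
      ins_inj hp hq, ih.imp_of_mem fun {s₁ s₂} h₁ h₂ hne => ?_⟩
    simp only [List.disjoint_left, List.mem_map]
    rintro _ ⟨p, hp, rfl⟩ ⟨q, hq, heq⟩
    apply hne
    rw [← del_ins hp (succ_notMem_labels (mem_shelfList.1 h₁)), ← heq,
      del_ins hq (succ_notMem_labels (mem_shelfList.1 h₂))]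

lemma length_shelfList (n : ℕ) : (shelfList n).length = n.factorial := by
  induction n with
  | zero => rfl
  | succ n ih =>
    have hlen : ∀ s ∈ shelfList n,
        (s.leafPaths.map fun p => ins s p (n + 1)).length = n + 1 := fun s hs => by
      simp [length_leafPaths, (mem_shelfList.1 hs).size_eq]
    rw [shelfList, List.length_flatMap, List.map_congr_left hlen, List.map_const',
      List.sum_replicate, ih, smul_eq_mul, Nat.factorial_succ, mul_comm]

lemma two_mul_sum_numLeft {n : ℕ} {S : Finset TShelf} (hS : ∀ t, t ∈ S ↔ IsShelf n t) :
    2 * ∑ t ∈ S, t.numLeft = S.card * (n - 1) := by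
  have hmirror : ∑ t ∈ S, t.numLeft = ∑ t ∈ S, t.numRight :=
    Finset.sum_nbij' mirror mirror (fun t ht => (hS _).2 ((hS t).1 ht).mirror)
      (fun t ht => (hS _).2 ((hS t).1 ht).mirror) (fun t _ => mirror_mirror t)
      (fun t _ => mirror_mirror t) (fun t _ => by rw [← numLeft_mirror, mirror_mirror])
  calc 2 * ∑ t ∈ S, t.numLeft = ∑ t ∈ S, (t.numLeft + t.numRight) := by
        rw [two_mul, Finset.sum_add_distrib, ← hmirror]
    _ = ∑ t ∈ S, (n - 1) := Finset.sum_congr rfl fun t ht => by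
        rw [numLeft_add_numRight, ((hS t).1 ht).size_eq]
    _ = S.card * (n - 1) := by rw [Finset.sum_const, smul_eq_mul]

end TShelf

theorem stmt3_general (n : ℕ) :
    (∑ᶠ t ∈ {t : TShelf | TShelf.IsShelf n t}, t.numLeft) =
      Nat.factorial n * (n - 1) / 2 := by
  classical
  have hmem (t : TShelf) : t ∈ (TShelf.shelfList n).toFinset ↔ TShelf.IsShelf n t := by
    simp [TShelf.mem_shelfList]
  have hset : {t : TShelf | TShelf.IsShelf n t} = ↑(TShelf.shelfList n).toFinset := by
    ext t
    exact (hmem t).symm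
  have hcard : (TShelf.shelfList n).toFinset.card = n.factorial := by
    rw [List.toFinset_card_of_nodup (TShelf.nodup_shelfList n), TShelf.length_shelfList]
  have htwice := TShelf.two_mul_sum_numLeft hmem
  rw [hset, finsum_mem_coe_finset, ← hcard, ← htwice, Nat.mul_div_cancel_left _ two_pos]

/-- the popularity of left children among all treeshelves of size
`n ≥ 1` is the Lah number `n! (n-1)/2`. -/
theorem stmt3 (n : ℕ) (hn : 1 ≤ n) :
    (∑ᶠ t ∈ {t : TShelf | TShelf.IsShelf n t}, t.numLeft) =
      Nat.factorial n * (n - 1) / 2 :=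
  stmt3_general n
end
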